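/- For |q| < 1, one has ∑_{n≥0} q^{3·binom(n,2)+n} (q^2;q^6)_n / (q;q)_{3n} = 1 / ((q;q^3)_∞ (q^5;q^6)_∞). -/

import Mathlib

/-!
Put `r = q ^ 3`. Since `(q;q)_{3n} = (q;r)_n (q²;r)_n (r;r)_n` and `(q²;q⁶)_n = (q;r)_n (-q;r)_n`,
the series is `∑ r^(n choose 2) qⁿ (-q;r)_n / ((r;r)_n (q²;r)_n)`. Multiply it by
`(q²;r)_∞ = (q²;r)_n (q² rⁿ;r)_∞` and expand the last factor by Euler's identity
`∑ r^(m choose 2) wᵐ / (r;r)_m = (-w;r)_∞`: the resulting double series, summed along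
antidiagonals, collapses by a finite `q`-binomial identity to the Euler series of `(-q;r)_∞`.
It remains to split `(q²;q³)_∞ = (q²;q⁶)_∞ (q⁵;q⁶)_∞ = (q;q³)_∞ (-q;q³)_∞ (q⁵;q⁶)_∞`.
-/

open Finset

noncomputable def qPoch (a q : ℂ) (n : ℕ) : ℂ := ∏ k ∈ Finset.range n, (1 - a * q ^ k)

noncomputable def qPochInf (a q : ℂ) : ℂ := ∏' k : ℕ, (1 - a * q ^ k)

open Filter Topology

theorem qPoch_zero (a q : ℂ) : qPoch a q 0 = 1 :=
  prod_range_zero _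

theorem qPoch_succ (a q : ℂ) (n : ℕ) : qPoch a q (n + 1) = qPoch a q n * (1 - a * q ^ n) :=
  prod_range_succ _ n

theorem qPoch_ne_zero {a q : ℂ} (h : ∀ k, 1 - a * q ^ k ≠ 0) (n : ℕ) : qPoch a q n ≠ 0 :=
  prod_ne_zero_iff.2 fun k _ => h k

theorem one_sub_mul_pow_ne_zero {a q : ℂ} (ha : ‖a‖ < 1) (hq : ‖q‖ ≤ 1) (k : ℕ) :
    1 - a * q ^ k ≠ 0 := by
  refine sub_ne_zero.2 fun h => ?_
  have : ‖a * q ^ k‖ < 1 := by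
    rw [norm_mul, norm_pow]
    exact (mul_le_of_le_one_right (norm_nonneg a) (pow_le_one₀ (norm_nonneg q) hq)).trans_lt ha
  rw [← h, norm_one] at this
  exact lt_irrefl _ this

theorem qPoch_mul_eq_prod (a q : ℂ) (k n : ℕ) :
    qPoch a q (k * n) = ∏ j ∈ range k, qPoch (a * q ^ j) (q ^ k) n := by
  induction n with
  | zero => simp [qPoch_zero]
  | succ n ih =>
    rw [mul_add, mul_one, qPoch, prod_range_add, ← qPoch, ih]
    simp only [qPoch_succ, prod_mul_distrib]
    congr 1
    refine prod_congr rfl fun j _ => ?_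
    rw [← pow_mul, pow_add]
    ring

theorem qPoch_mul_qPoch_neg (a q : ℂ) (n : ℕ) :
    qPoch a q n * qPoch (-a) q n = qPoch (a ^ 2) (q ^ 2) n := by
  rw [qPoch, qPoch, qPoch, ← prod_mul_distrib]
  refine prod_congr rfl fun k _ => ?_
  ring

theorem summable_norm_neg_mul_pow (a : ℂ) {q : ℂ} (hq : ‖q‖ < 1) :
    Summable fun k : ℕ => ‖-(a * q ^ k)‖ := by
  simpa [norm_mul, norm_pow] using (summable_geometric_of_lt_one (norm_nonneg q) hq).mul_left ‖a‖

theorem multipliable_one_sub_mul_pow (a : ℂ) {q : ℂ} (hq : ‖q‖ < 1) :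
    Multipliable fun k : ℕ => 1 - a * q ^ k := by
  simpa [sub_eq_add_neg] using multipliable_one_add_of_summable (summable_norm_neg_mul_pow a hq)

theorem tendsto_qPoch (a : ℂ) {q : ℂ} (hq : ‖q‖ < 1) :
    Tendsto (qPoch a q) atTop (𝓝 (qPochInf a q)) :=
  (multipliable_one_sub_mul_pow a hq).hasProd.tendsto_prod_nat

theorem qPochInf_ne_zero {a q : ℂ} (hq : ‖q‖ < 1) (h : ∀ k, 1 - a * q ^ k ≠ 0) :
    qPochInf a q ≠ 0 := by
  simpa [qPochInf, sub_eq_add_neg] using tprod_one_add_ne_zero_of_summable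
    (by simpa [sub_eq_add_neg] using h) (summable_norm_neg_mul_pow a hq)

theorem qPoch_mul_qPochInf (a : ℂ) {q : ℂ} (hq : ‖q‖ < 1) (n : ℕ) :
    qPoch a q n * qPochInf (a * q ^ n) q = qPochInf a q := by
  have htail : ∀ i : ℕ, 1 - a * q ^ n * q ^ i = 1 - a * q ^ (i + n) := fun i => by ring
  rw [qPochInf, qPochInf, tprod_congr htail, qPoch]
  exact Multipliable.prod_mul_tprod_nat_mul' (f := fun i => 1 - a * q ^ i)
    ((multipliable_one_sub_mul_pow (a * q ^ n) hq).congr htail)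

theorem qPochInf_eq_prod (a : ℂ) {q : ℂ} (hq : ‖q‖ < 1) {k : ℕ} (hk : 0 < k) :
    qPochInf a q = ∏ j ∈ range k, qPochInf (a * q ^ j) (q ^ k) := by
  have hqk : ‖q ^ k‖ < 1 := by
    rw [norm_pow]; exact pow_lt_one₀ (norm_nonneg q) hq hk.ne'
  refine tendsto_nhds_unique ((tendsto_qPoch a hq).comp (tendsto_id.const_mul_atTop' hk)) ?_
  simp only [Function.comp_def, id, qPoch_mul_eq_prod]
  exact tendsto_finsetProd _ fun j _ => tendsto_qPoch _ hqk

theorem qPochInf_mul_qPochInf_neg (a : ℂ) {q : ℂ} (hq : ‖q‖ < 1) :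
    qPochInf a q * qPochInf (-a) q = qPochInf (a ^ 2) (q ^ 2) := by
  have hq2 : ‖q ^ 2‖ < 1 := by
    rw [norm_pow]; exact pow_lt_one₀ (norm_nonneg q) hq two_ne_zero
  refine tendsto_nhds_unique ((tendsto_qPoch a hq).mul (tendsto_qPoch (-a) hq)) ?_
  simp only [qPoch_mul_qPoch_neg]
  exact tendsto_qPoch _ hq2

theorem qPochInf_sq (a : ℂ) {q : ℂ} (hq : ‖q‖ < 1) :
    qPochInf (a ^ 2) q = qPochInf a q * qPochInf (-a) q * qPochInf (a ^ 2 * q) (q ^ 2) := by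
  rw [qPochInf_eq_prod _ hq (k := 2) (by norm_num), qPochInf_mul_qPochInf_neg a hq,
    prod_range_succ, prod_range_one, pow_zero, mul_one, pow_one]

theorem qPoch_sq_div_qPoch_three_mul {a q : ℂ} (n : ℕ) (h : qPoch a (q ^ 3) n ≠ 0) :
    qPoch (a ^ 2) (q ^ 6) n / qPoch a q (3 * n)
      = qPoch (-a) (q ^ 3) n / (qPoch (a * q) (q ^ 3) n * qPoch (a * q ^ 2) (q ^ 3) n) := by
  rw [show q ^ 6 = (q ^ 3) ^ 2 by ring, ← qPoch_mul_qPoch_neg, qPoch_mul_eq_prod, prod_range_succ,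
    prod_range_succ, prod_range_one, pow_zero, mul_one, pow_one, mul_assoc, mul_div_mul_left _ _ h]

theorem exists_norm_le_of_tendsto {E : Type*} [SeminormedAddCommGroup E] {u : ℕ → E} {x : E}
    (h : Tendsto u atTop (𝓝 x)) :
    ∃ C > 0, ∀ n, ‖u n‖ ≤ C := by
  obtain ⟨C, hC, hCu⟩ := (Metric.isBounded_range_of_tendsto u h).exists_pos_norm_le
  exact ⟨C, hC, fun n => hCu _ ⟨n, rfl⟩⟩

theorem exists_norm_inv_qPoch_le {a q : ℂ} (hq : ‖q‖ < 1) (h : ∀ k, 1 - a * q ^ k ≠ 0) :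
    ∃ C > 0, ∀ n, ‖(qPoch a q n)⁻¹‖ ≤ C :=
  exists_norm_le_of_tendsto ((tendsto_qPoch a hq).inv₀ (qPochInf_ne_zero hq h))

theorem Nat.add_choose_two (n m : ℕ) : (n + m).choose 2 = n.choose 2 + m.choose 2 + n * m := by
  induction m with
  | zero => simp
  | succ m ih =>
    rw [← add_assoc, Nat.choose_succ_succ', ih, Nat.choose_succ_succ', Nat.choose_one_right,
      Nat.choose_one_right]
    ring

section Euler

variable {q : ℂ}

theorem exists_norm_euler_term_le (hq : ‖q‖ < 1) :
    ∃ C > 0, ∀ (w : ℂ) (m : ℕ), ‖q ^ m.choose 2 * w ^ m / qPoch q q m‖ ≤ C * ‖w‖ ^ m := by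
  obtain ⟨C, hC0, hC⟩ := exists_norm_inv_qPoch_le hq (one_sub_mul_pow_ne_zero hq hq.le)
  refine ⟨C, hC0, fun w m => ?_⟩
  rw [div_eq_mul_inv, norm_mul, norm_mul, norm_pow, norm_pow]
  calc ‖q‖ ^ m.choose 2 * ‖w‖ ^ m * ‖(qPoch q q m)⁻¹‖ ≤ 1 * ‖w‖ ^ m * C := by
        gcongr
        · exact pow_le_one₀ (norm_nonneg q) hq.le
        · exact hC m
    _ = C * ‖w‖ ^ m := by ring

theorem summable_euler_term (hq : ‖q‖ < 1) {w : ℂ} (hw : ‖w‖ < 1) :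
    Summable fun m : ℕ => q ^ m.choose 2 * w ^ m / qPoch q q m := by
  obtain ⟨C, -, hC⟩ := exists_norm_euler_term_le hq
  exact .of_norm_bounded ((summable_geometric_of_lt_one (norm_nonneg w) hw).mul_left C) (hC w)

theorem tsum_euler_term_eq_one_add_mul (hq : ‖q‖ < 1) {w : ℂ} (hw : ‖w‖ < 1) :
    ∑' m : ℕ, q ^ m.choose 2 * w ^ m / qPoch q q m
      = (1 + w) * ∑' m : ℕ, q ^ m.choose 2 * (q * w) ^ m / qPoch q q m := by
  have hqw : ‖q * w‖ < 1 := by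
    rw [norm_mul]; exact (mul_le_of_le_one_left (norm_nonneg w) hq.le).trans_lt hw
  have hterm : ∀ m : ℕ, q ^ (m + 1).choose 2 * w ^ (m + 1) / qPoch q q (m + 1)
      = q ^ (m + 1).choose 2 * (q * w) ^ (m + 1) / qPoch q q (m + 1)
        + w * (q ^ m.choose 2 * (q * w) ^ m / qPoch q q m) := by
    intro m
    have hP := qPoch_ne_zero (one_sub_mul_pow_ne_zero hq hq.le) m
    have hm := one_sub_mul_pow_ne_zero hq hq.le m
    rw [qPoch_succ, Nat.add_choose_two, Nat.choose_eq_zero_of_lt one_lt_two, pow_add, pow_add]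
    field_simp
    ring
  have hs := summable_euler_term hq hqw
  rw [(summable_euler_term hq hw).tsum_eq_zero_add, hs.tsum_eq_zero_add, tsum_congr hterm,
    ((summable_nat_add_iff 1).2 hs).tsum_add (hs.mul_left w), tsum_mul_left, hs.tsum_eq_zero_add]
  simp only [Nat.choose_zero_succ, pow_zero, qPoch_zero]
  ring

theorem tsum_euler_term_eq_qPoch_mul (hq : ‖q‖ < 1) {w : ℂ} (hw : ‖w‖ < 1) (N : ℕ) :
    ∑' m : ℕ, q ^ m.choose 2 * w ^ m / qPoch q q m
      = qPoch (-w) q N * ∑' m : ℕ, q ^ m.choose 2 * (q ^ N * w) ^ m / qPoch q q m := by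
  induction N with
  | zero => simp [qPoch_zero]
  | succ N ih =>
    have hNw : ‖q ^ N * w‖ < 1 := by
      rw [norm_mul, norm_pow]
      exact (mul_le_of_le_one_left (norm_nonneg w) (pow_le_one₀ (norm_nonneg q) hq.le)).trans_lt hw
    rw [ih, tsum_euler_term_eq_one_add_mul hq hNw, qPoch_succ, pow_succ', mul_assoc q]
    ring

/-- Euler's identity. -/
theorem tsum_euler_term_eq_qPochInf (hq : ‖q‖ < 1) {w : ℂ} (hw : ‖w‖ < 1) :
    ∑' m : ℕ, q ^ m.choose 2 * w ^ m / qPoch q q m = qPochInf (-w) q := by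
  obtain ⟨C, hC0, hC⟩ := exists_norm_euler_term_le hq
  have hlim : Tendsto (fun N : ℕ => ∑' m : ℕ, q ^ m.choose 2 * (q ^ N * w) ^ m / qPoch q q m)
      atTop (𝓝 (∑' m : ℕ, q ^ m.choose 2 * (0 : ℂ) ^ m / qPoch q q m)) := by
    refine tendsto_tsum_of_dominated_convergence
      ((summable_geometric_of_lt_one (norm_nonneg w) hw).mul_left C) (fun m => ?_)
      (.of_forall fun N m => (hC _ m).trans ?_)
    · have h0 : Tendsto (fun N : ℕ => q ^ N * w) atTop (𝓝 0) := by
        simpa using (tendsto_pow_atTop_nhds_zero_of_norm_lt_one hq).mul_const w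
      exact ((h0.pow m).const_mul _).div_const _
    · gcongr
      rw [norm_mul, norm_pow]
      exact mul_le_of_le_one_left (norm_nonneg w) (pow_le_one₀ (norm_nonneg q) hq.le)
  rw [tsum_eq_single 0 fun m hm => by simp [hm]] at hlim
  simp only [Nat.choose_zero_succ, pow_zero, qPoch_zero, div_one, mul_one] at hlim
  have hprod := (tendsto_qPoch (-w) hq).mul hlim
  simp only [← tsum_euler_term_eq_qPoch_mul hq hw, mul_one] at hprod
  exact tendsto_nhds_unique tendsto_const_nhds hprod

end Euler

theorem sum_antidiagonal_qPoch_mul_pow_div (b : ℂ) {r : ℂ} (hr : ∀ k, 1 - r * r ^ k ≠ 0) (N : ℕ) :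
    ∑ p ∈ antidiagonal N, qPoch b r p.1 * b ^ p.2 / (qPoch r r p.1 * qPoch r r p.2)
      = (qPoch r r N)⁻¹ := by
  set f : ℕ × ℕ → ℂ := fun p => qPoch b r p.1 * b ^ p.2 / (qPoch r r p.1 * qPoch r r p.2)
  have hP := qPoch_ne_zero hr
  induction N with
  | zero => simp [f, qPoch_zero]
  | succ N ih =>
    -- `1 - r ^ (k + l) = (1 - r ^ k) + r ^ k (1 - r ^ l)` is the `q`-Pascal rule
    have hpascal : ∀ p ∈ antidiagonal (N + 1),
        f p = (1 - r * r ^ N)⁻¹ * ((1 - r ^ p.1) * f p + r ^ p.1 * (1 - r ^ p.2) * f p) := by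
      intro p hp
      have hN : r * r ^ N = r ^ p.1 * r ^ p.2 := by
        rw [← pow_succ', ← pow_add, mem_antidiagonal.1 hp]
      have := hr N
      field_simp
      rw [hN]
      ring
    have hshift : ∀ p : ℕ × ℕ,
        (1 - r ^ (p.1 + 1)) * f (p.1 + 1, p.2) + r ^ p.1 * (1 - r ^ (p.2 + 1)) * f (p.1, p.2 + 1)
          = f p := by
      rintro ⟨k, l⟩
      have := hP k
      have := hP l
      have := hr k
      have := hr l
      simp only [f, qPoch_succ, pow_succ']
      field_simp
      ring
    rw [sum_congr rfl hpascal, ← mul_sum, sum_add_distrib, Nat.sum_antidiagonal_succ,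
      Nat.sum_antidiagonal_succ']
    simp only [pow_zero, sub_self, zero_mul, mul_zero, zero_add]
    rw [← sum_add_distrib, sum_congr rfl fun p _ => hshift p, ih, qPoch_succ, mul_inv, mul_comm]

theorem tsum_prod_eq_tsum_sum_antidiagonal {α : Type*} [AddCommMonoid α] [TopologicalSpace α]
    [ContinuousAdd α] [T3Space α] {F : ℕ × ℕ → α} (hF : Summable F) :
    ∑' p, F p = ∑' n, ∑ p ∈ antidiagonal n, F p := by
  conv_rhs => congr; ext; rw [← sum_finset_coe, ← tsum_fintype (L := .unconditional _)]
  rw [← HasAntidiagonal.sigmaAntidiagonalEquivProd.tsum_eq F]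
  exact Summable.tsum_sigma' (fun n => (hasSum_fintype _).summable)
    (HasAntidiagonal.sigmaAntidiagonalEquivProd.summable_iff.mpr hF)

section DoubleSeries

variable {r b x : ℂ}

noncomputable def doubleSeriesTerm (r b x : ℂ) (p : ℕ × ℕ) : ℂ :=
  r ^ (p.1 + p.2).choose 2
    * (x ^ p.1 * qPoch b r p.1 * (qPoch r r p.1)⁻¹) * ((b * x) ^ p.2 * (qPoch r r p.2)⁻¹)

theorem summable_doubleSeriesTerm (hr : ‖r‖ < 1) (hx : ‖x‖ < 1) (hbx : ‖b * x‖ < 1) :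
    Summable (doubleSeriesTerm r b x) := by
  obtain ⟨CB, hCB0, hCB⟩ := exists_norm_le_of_tendsto (tendsto_qPoch b hr)
  obtain ⟨CP, hCP0, hCP⟩ := exists_norm_inv_qPoch_le hr (one_sub_mul_pow_ne_zero hr hr.le)
  rw [norm_mul] at hbx
  refine .of_norm_bounded (g := fun p => (CB * CP * ‖x‖ ^ p.1) * (CP * (‖b‖ * ‖x‖) ^ p.2))
    (.mul_of_nonneg ((summable_geometric_of_lt_one (norm_nonneg x) hx).mul_left _)
      ((summable_geometric_of_lt_one (by positivity) hbx).mul_left _)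
      (fun n => by positivity) (fun m => by positivity)) fun ⟨n, m⟩ => ?_
  have := pow_le_one₀ (n := (n + m).choose 2) (norm_nonneg r) hr.le
  have := hCB n
  have := hCP n
  have := hCP m
  simp only [doubleSeriesTerm, norm_mul, norm_pow]
  calc _ ≤ 1 * (‖x‖ ^ n * CB * CP) * ((‖b‖ * ‖x‖) ^ m * CP) := by gcongr
    _ = CB * CP * ‖x‖ ^ n * (CP * (‖b‖ * ‖x‖) ^ m) := by ring

theorem tsum_doubleSeriesTerm_row (hr : ‖r‖ < 1) (hbx : ‖b * x‖ < 1) (n : ℕ) :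
    ∑' m : ℕ, doubleSeriesTerm r b x (n, m)
      = r ^ n.choose 2 * x ^ n * qPoch b r n / (qPoch r r n * qPoch (-(b * x)) r n)
        * qPochInf (-(b * x)) r := by
  have hbxn : ‖b * x * r ^ n‖ < 1 := by
    rw [norm_mul, norm_pow]
    exact (mul_le_of_le_one_right (norm_nonneg _) (pow_le_one₀ (norm_nonneg r) hr.le)).trans_lt hbx
  have hcn : qPoch (-(b * x)) r n ≠ 0 :=
    qPoch_ne_zero (one_sub_mul_pow_ne_zero (by rwa [norm_neg]) hr.le) n
  symm
  calc _ = r ^ n.choose 2 * x ^ n * qPoch b r n / qPoch r r n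
        * ((qPoch (-(b * x)) r n)⁻¹ * qPochInf (-(b * x)) r) := by
        rw [mul_div_assoc, div_mul_eq_div_div]
        ring
    _ = r ^ n.choose 2 * x ^ n * qPoch b r n / qPoch r r n
        * ∑' m : ℕ, r ^ m.choose 2 * (b * x * r ^ n) ^ m / qPoch r r m := by
        rw [tsum_euler_term_eq_qPochInf hr hbxn, ← qPoch_mul_qPochInf _ hr n, neg_mul,
          inv_mul_cancel_left₀ hcn]
    _ = ∑' m : ℕ, doubleSeriesTerm r b x (n, m) := by
        rw [← tsum_mul_left]
        refine tsum_congr fun m => ?_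
        rw [doubleSeriesTerm, Nat.add_choose_two, pow_add, pow_add, mul_pow (b * x), pow_mul]
        ring

theorem sum_antidiagonal_doubleSeriesTerm (hr : ∀ k, 1 - r * r ^ k ≠ 0) (N : ℕ) :
    ∑ p ∈ antidiagonal N, doubleSeriesTerm r b x p = r ^ N.choose 2 * x ^ N / qPoch r r N := by
  have hterm : ∀ p ∈ antidiagonal N, doubleSeriesTerm r b x p = r ^ N.choose 2 * x ^ N
      * (qPoch b r p.1 * b ^ p.2 / (qPoch r r p.1 * qPoch r r p.2)) := by
    rintro ⟨k, l⟩ hkl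
    obtain rfl := mem_antidiagonal.1 hkl
    rw [doubleSeriesTerm]
    ring
  rw [sum_congr rfl hterm, ← mul_sum, sum_antidiagonal_qPoch_mul_pow_div b hr, div_eq_mul_inv]

theorem tsum_mul_qPochInf_eq_qPochInf_neg (hr : ‖r‖ < 1) (hx : ‖x‖ < 1) (hbx : ‖b * x‖ < 1) :
    (∑' n : ℕ, r ^ n.choose 2 * x ^ n * qPoch b r n / (qPoch r r n * qPoch (-(b * x)) r n))
      * qPochInf (-(b * x)) r = qPochInf (-x) r := by
  have hF := summable_doubleSeriesTerm hr hx hbx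
  calc _ = ∑' n : ℕ, ∑' m : ℕ, doubleSeriesTerm r b x (n, m) := by
        rw [← tsum_mul_right]
        exact tsum_congr fun n => (tsum_doubleSeriesTerm_row hr hbx n).symm
    _ = ∑' p, doubleSeriesTerm r b x p := (hF.tsum_prod' hF.prod_factor).symm
    _ = ∑' N : ℕ, ∑ p ∈ antidiagonal N, doubleSeriesTerm r b x p :=
        tsum_prod_eq_tsum_sum_antidiagonal hF
    _ = ∑' N : ℕ, r ^ N.choose 2 * x ^ N / qPoch r r N :=
        tsum_congr (sum_antidiagonal_doubleSeriesTerm (one_sub_mul_pow_ne_zero hr hr.le))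
    _ = qPochInf (-x) r := tsum_euler_term_eq_qPochInf hr hx

end DoubleSeries

theorem stmt10 (q : ℂ) (hq : ‖q‖ < 1) :
    ∑' n : ℕ, (q ^ (3 * n.choose 2 + n) * qPoch (q ^ 2) (q ^ 6) n / qPoch q q (3 * n))
    = 1 / (qPochInf q (q ^ 3) * qPochInf (q ^ 5) (q ^ 6)) := by
  have hpow : ∀ {k : ℕ}, k ≠ 0 → ‖q ^ k‖ < 1 := fun hk => by
    rw [norm_pow]; exact pow_lt_one₀ (norm_nonneg q) hq hk
  have hq3 : ‖q ^ 3‖ < 1 := hpow three_ne_zero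
  have hterm : ∀ n : ℕ, q ^ (3 * n.choose 2 + n) * qPoch (q ^ 2) (q ^ 6) n / qPoch q q (3 * n)
      = (q ^ 3) ^ n.choose 2 * q ^ n * qPoch (-q) (q ^ 3) n
        / (qPoch (q ^ 3) (q ^ 3) n * qPoch (q ^ 2) (q ^ 3) n) := fun n => by
    rw [mul_div_assoc, qPoch_sq_div_qPoch_three_mul n
      (qPoch_ne_zero (one_sub_mul_pow_ne_zero hq hq3.le) n), pow_add, pow_mul, ← sq, ← pow_succ']
    ring
  have hkey := tsum_mul_qPochInf_eq_qPochInf_neg (b := -q) hq3 hq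
    (by rw [neg_mul, norm_neg, ← sq]; exact hpow two_ne_zero)
  rw [show -(-q * q) = q ^ 2 by ring, ← tsum_congr hterm, qPochInf_sq q hq3,
    ← pow_add, ← pow_mul] at hkey
  have hA := qPochInf_ne_zero hq3 (one_sub_mul_pow_ne_zero hq hq3.le)
  have hB := qPochInf_ne_zero hq3 (one_sub_mul_pow_ne_zero (a := -q) (by rwa [norm_neg]) hq3.le)
  have hC := qPochInf_ne_zero (hpow (k := 6) (by norm_num))
    (one_sub_mul_pow_ne_zero (hpow (k := 5) (by norm_num)) (hpow (k := 6) (by norm_num)).le)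
  rw [eq_div_iff (mul_ne_zero hA hC)]
  apply mul_right_cancel₀ hB
  linear_combination hkey
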